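/- The Lebesgue integral I : L¹([0,1]; ℝ) → ℝ, I(f) = ∫_{[0,1]} f(x) dx, is the unique continuous linear functional on L¹([0,1]; ℝ) satisfying I(1_{[0,1]}) = 1 and I(γ(f, g)) = (I(f) + I(g))/2 for all f, g ∈ L¹([0,1]; ℝ), where 1_{[0,1]} denotes the constant function 1. -/

import Mathlib

open MeasureTheory

/-- Lebesgue measure restricted to `[0,1]`. -/
noncomputable def unitMeasure : Measure ℝ := volume.restrict (Set.Icc (0:ℝ) 1)

/-- The juxtaposition `γ(f,g)(x) = f(2x)` for `x < 1/2`, `g(2x − 1)` for `x ≥ 1/2`. -/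
noncomputable def gammaFun {E : Type*} (f g : ℝ → E) (x : ℝ) : E :=
  if x < 1/2 then f (2 * x) else g (2 * x - 1)

open Set Filter Topology

/-!
On each half of `[0,1]` the juxtaposition `γ(f,g)` is an affine reparametrisation of `f` or `g`,
so the integral satisfies `I(γ(f,g)) = (I f + I g) / 2`.

Conversely, the difference `K` of two such functionals kills constants and satisfies
`K(γ(f,g)) = (K f + K g) / 2`. As `γ(1_{(-∞,t)}, 0) = 1_{(-∞,t/2)}` and
`γ(1, 1_{(-∞,t)}) = 1_{(-∞,(t+1)/2)}` on `[0,1]`, the bounded function `ψ t = K 1_{(-∞,t)}`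
satisfies `ψ (t/2) = ψ t / 2 = ψ ((t+1)/2)`; every point of `[0,1]` is the image of a point of
`[0,1]` under one of these two contractions, so `|ψ| ≤ ‖K‖ / 2ⁿ` for all `n` and `ψ = 0`.
The half-lines form a π-system generating the Borel sets, so by Dynkin's theorem (monotone
unions converge in `L¹`) `K` kills all indicators, hence the dense subspace of simple functions.
-/

namespace MeasureTheory

variable {α E : Type*} {m : MeasurableSpace α} {μ : Measure α} {p : ENNReal}
  [NormedAddCommGroup E]

theorem indicatorConstLp_smul {𝕜 : Type*} [NormedField 𝕜] [NormedSpace 𝕜 E] {s : Set α}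
    (hs : MeasurableSet s) (hμs : μ s ≠ ⊤) (a : 𝕜) (c : E) :
    indicatorConstLp p hs hμs (a • c) = a • indicatorConstLp p hs hμs c := by
  apply Lp.ext
  filter_upwards [indicatorConstLp_coeFn (p := p) (hs := hs) (hμs := hμs) (c := a • c),
    Lp.coeFn_smul a (indicatorConstLp p hs hμs c),
    indicatorConstLp_coeFn (p := p) (hs := hs) (hμs := hμs) (c := c)] with x hac ha hc
  rw [hac, ha, Pi.smul_apply, hc]
  by_cases hx : x ∈ s <;> simp [hx]

variable [IsFiniteMeasure μ] [Fact (1 ≤ p)]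

theorem tendsto_indicatorConstLp_iUnion_of_monotone (hp : p ≠ ⊤) {s : ℕ → Set α}
    (hs : ∀ n, MeasurableSet (s n)) (hmono : Monotone s) (hU : MeasurableSet (⋃ n, s n))
    (c : E) :
    Tendsto (fun n ↦ indicatorConstLp p (hs n) (measure_ne_top μ (s n)) c) atTop
      (𝓝 (indicatorConstLp p hU (measure_ne_top μ _) c)) := by
  refine tendsto_indicatorConstLp_set hp ?_
  have h := tendsto_measure_iInter_atTop (μ := μ) (s := fun n ↦ (⋃ n, s n) \ s n)
    (fun n ↦ (hU.diff (hs n)).nullMeasurableSet)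
    (fun _ _ hmn ↦ sdiff_subset_sdiff_right (hmono hmn)) ⟨0, measure_ne_top _ _⟩
  rw [← sdiff_iUnion, sdiff_self, measure_empty] at h
  simpa only [symmDiff_of_le (subset_iUnion s _), Function.comp_def] using h

variable {F : Type*} [AddCommGroup F] [TopologicalSpace F] [T2Space F]
  {𝓕 : Type*} [FunLike 𝓕 (Lp E p μ) F] [AddMonoidHomClass 𝓕 (Lp E p μ) F]

theorem map_indicatorConstLp_eq_zero_of_isPiSystem (hp : p ≠ ⊤) (K : 𝓕) (hK : Continuous K)
    {C : Set (Set α)} (hgen : m = MeasurableSpace.generateFrom C) (hC : IsPiSystem C)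
    (hK_C : ∀ s ∈ C, ∀ (hs : MeasurableSet s) (c : E),
      K (indicatorConstLp p hs (measure_ne_top μ s) c) = 0)
    (hK_univ : ∀ c : E, K (indicatorConstLp p .univ (measure_ne_top μ univ) c) = 0)
    {s : Set α} (hs : MeasurableSet s) (c : E) :
    K (indicatorConstLp p hs (measure_ne_top μ s) c) = 0 := by
  let Z : Set α → Prop := fun s ↦ ∀ (hs : MeasurableSet s) (c : E),
    K (indicatorConstLp p hs (measure_ne_top μ s) c) = 0
  have union : ∀ {s t}, MeasurableSet s → MeasurableSet t → Disjoint s t → Z s → Z t →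
      Z (s ∪ t) := by
    intro s t hs ht hst hZs hZt _ c
    rw [indicatorConstLp_disjoint_union hs ht (measure_ne_top μ s) (measure_ne_top μ t) hst,
      map_add, hZs, hZt, add_zero]
  suffices Z s from this hs c
  induction s, hs using MeasurableSpace.induction_on_inter hgen hC with
  | empty => intro _ c; rw [indicatorConstLp_empty, map_zero]
  | basic t ht => exact hK_C t ht
  | compl t ht hZt =>
    intro htc c
    have h := congrArg K (indicatorConstLp_disjoint_union (p := p) ht htc (measure_ne_top μ t)
      (measure_ne_top μ tᶜ) disjoint_compl_right c)
    simp only [union_compl_self] at h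
    rwa [map_add, hK_univ, hZt, zero_add, eq_comm] at h
  | iUnion f hfd hfm hZf =>
    have hacc_meas : ∀ n, MeasurableSet (accumulate f n) := fun n ↦
      .iUnion fun i ↦ .iUnion fun _ ↦ hfm i
    have hacc : ∀ n, Z (accumulate f n) := by
      intro n
      induction n with
      | zero => rw [accumulate_zero_nat]; exact hZf 0
      | succ n ih =>
        rw [accumulate_succ]
        exact union (hacc_meas n) (hfm _)
          (disjoint_accumulate hfd (Nat.lt_succ_self n)) ih (hZf _)
    rw [← iUnion_accumulate]
    intro hU c
    exact tendsto_nhds_unique ((hK.tendsto _).comp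
      (tendsto_indicatorConstLp_iUnion_of_monotone hp hacc_meas monotone_accumulate hU c))
      (tendsto_const_nhds.congr fun n ↦ (hacc n (hacc_meas n) c).symm)

theorem map_eq_zero_of_map_indicatorConstLp_eq_zero (hp : p ≠ ⊤) (K : 𝓕) (hK : Continuous K)
    (hK_ind : ∀ {s : Set α} (hs : MeasurableSet s) (c : E),
      K (indicatorConstLp p hs (measure_ne_top μ s) c) = 0)
    (f : Lp E p μ) : K f = 0 := by
  induction f using Lp.induction hp with
  | indicatorConst c hs _ => exact hK_ind hs c
  | add _ _ _ hf hg => rw [map_add, hf, hg, add_zero]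
  | isClosed => exact isClosed_eq hK continuous_const

end MeasureTheory

theorem eq_zero_of_abs_le_of_self_similar {ψ : ℝ → ℝ} {M : ℝ}
    (hM : ∀ t ∈ Icc (0 : ℝ) 1, |ψ t| ≤ M)
    (hleft : ∀ t ∈ Icc (0 : ℝ) 1, ψ (t / 2) = ψ t / 2)
    (hright : ∀ t ∈ Icc (0 : ℝ) 1, ψ ((t + 1) / 2) = ψ t / 2) :
    ∀ t ∈ Icc (0 : ℝ) 1, ψ t = 0 := by
  have hbound : ∀ n : ℕ, ∀ t ∈ Icc (0 : ℝ) 1, |ψ t| ≤ M * (1 / 2) ^ n := by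
    intro n
    induction n with
    | zero => simpa using hM
    | succ n ih =>
      rintro t ⟨ht0, ht1⟩
      obtain ⟨s, hs, hψt⟩ : ∃ s ∈ Icc (0 : ℝ) 1, ψ t = ψ s / 2 := by
        rcases le_or_gt t (1 / 2) with h | h
        · refine ⟨2 * t, ⟨by linarith, by linarith⟩, ?_⟩
          rw [← hleft _ ⟨by linarith, by linarith⟩, mul_div_cancel_left₀ t two_ne_zero]
        · refine ⟨2 * t - 1, ⟨by linarith, by linarith⟩, ?_⟩
          rw [← hright _ ⟨by linarith, by linarith⟩]
          ring_nf
      rw [hψt, abs_div, abs_two, pow_succ]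
      linarith [ih s hs]
  intro t ht
  have hlim : Tendsto (fun n : ℕ ↦ M * (1 / 2 : ℝ) ^ n) atTop (𝓝 0) := by
    simpa using (tendsto_pow_atTop_nhds_zero_of_lt_one (r := (1 / 2 : ℝ)) (by norm_num)
      (by norm_num)).const_mul M
  exact abs_eq_zero.mp (le_antisymm (ge_of_tendsto' hlim (hbound · t ht)) (abs_nonneg _))

instance : IsProbabilityMeasure unitMeasure :=
  ⟨by simp [unitMeasure]⟩

theorem ae_mem_Ioo_unitMeasure : ∀ᵐ x ∂unitMeasure, x ∈ Ioo (0 : ℝ) 1 := by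
  rw [unitMeasure, ← Measure.restrict_congr_set Ioo_ae_eq_Icc]
  exact ae_restrict_mem measurableSet_Ioo

theorem gammaFun_ae_congr {E : Type*} {f f' g g' : ℝ → E} (hf : f =ᵐ[unitMeasure] f')
    (hg : g =ᵐ[unitMeasure] g') : gammaFun f g =ᵐ[unitMeasure] gammaFun f' g' := by
  have hdouble : Measure.QuasiMeasurePreserving (fun x : ℝ ↦ 2 * x) :=
    Measure.quasiMeasurePreserving_smul volume two_ne_zero
  have hshift : Measure.QuasiMeasurePreserving (fun x : ℝ ↦ 2 * x - 1) :=
    (measurePreserving_sub_right volume 1).quasiMeasurePreserving.comp hdouble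
  rw [unitMeasure, EventuallyEq, ae_restrict_iff' measurableSet_Icc] at hf hg ⊢
  filter_upwards [hdouble.ae hf, hshift.ae hg] with x hfx hgx ⟨hx0, hx1⟩
  unfold gammaFun
  split_ifs
  · exact hfx ⟨by linarith, by linarith⟩
  · exact hgx ⟨by linarith, by linarith⟩

theorem integral_unitMeasure {E : Type*} [NormedAddCommGroup E] [NormedSpace ℝ E]
    (f : ℝ → E) :
    ∫ x, f x ∂unitMeasure = ∫ x in 0..1, f x := by
  rw [intervalIntegral.integral_of_le zero_le_one, unitMeasure, integral_Icc_eq_integral_Ioc]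

theorem integral_gammaFun {E : Type*} [NormedAddCommGroup E] [NormedSpace ℝ E] {f g : ℝ → E}
    (hγ : Integrable (gammaFun f g) unitMeasure) :
    ∫ x, gammaFun f g x ∂unitMeasure =
      (1 / 2 : ℝ) • (∫ x, f x ∂unitMeasure + ∫ x, g x ∂unitMeasure) := by
  have hγ' : IntervalIntegrable (gammaFun f g) volume 0 1 :=
    (intervalIntegrable_iff_integrableOn_Icc_of_le zero_le_one).2 hγ
  have hleft :
      ∫ x in (0 : ℝ)..1 / 2, gammaFun f g x = (1 / 2 : ℝ) • ∫ x in (0 : ℝ)..1, f x := by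
    have := intervalIntegral.integral_comp_mul_left (a := 0) (b := 1 / 2) f two_ne_zero
    norm_num only at this
    rw [← this]
    refine intervalIntegral.integral_congr_ae ?_
    filter_upwards [volume.ae_ne (1 / 2 : ℝ)] with x hx hmem
    rw [uIoc_of_le (by norm_num)] at hmem
    exact if_pos (lt_of_le_of_ne hmem.2 hx)
  have hright :
      ∫ x in (1 / 2 : ℝ)..1, gammaFun f g x = (1 / 2 : ℝ) • ∫ x in (0 : ℝ)..1, g x := by
    have := intervalIntegral.integral_comp_mul_sub (a := 1 / 2) (b := 1) g two_ne_zero 1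
    norm_num only at this
    rw [← this]
    refine intervalIntegral.integral_congr fun x hx ↦ ?_
    rw [uIcc_of_le (by norm_num)] at hx
    exact if_neg (not_lt.2 hx.1)
  rw [integral_unitMeasure, integral_unitMeasure, integral_unitMeasure,
    ← intervalIntegral.integral_add_adjacent_intervals (b := 1 / 2)
      (hγ'.mono_set (uIcc_subset_uIcc (by simp) (by norm_num)))
      (hγ'.mono_set (uIcc_subset_uIcc (by norm_num) (by simp))),
    hleft, hright, smul_add]

noncomputable def indicatorIio (t : ℝ) : Lp ℝ 1 unitMeasure :=
  indicatorConstLp 1 measurableSet_Iio (measure_ne_top _ (Iio t)) 1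

theorem coeFn_indicatorIio (t : ℝ) :
    ⇑(indicatorIio t) =ᵐ[unitMeasure] (Iio t).indicator fun _ ↦ 1 :=
  indicatorConstLp_coeFn

theorem norm_indicatorIio_le (t : ℝ) : ‖indicatorIio t‖ ≤ 1 :=
  norm_indicatorConstLp_le.trans (by simp)

theorem indicatorIio_of_nonpos {t : ℝ} (ht : t ≤ 0) : indicatorIio t = 0 := by
  refine Lp.eq_zero_iff_ae_eq_zero.2 ?_
  filter_upwards [coeFn_indicatorIio t, ae_mem_Ioo_unitMeasure] with x hx hx01
  exact hx.trans (indicator_of_notMem (fun hxt ↦ by linarith [hx01.1, mem_Iio.1 hxt]) _)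

theorem coeFn_indicatorIio_of_one_le {t : ℝ} (ht : 1 ≤ t) :
    ⇑(indicatorIio t) =ᵐ[unitMeasure] fun _ ↦ 1 := by
  filter_upwards [coeFn_indicatorIio t, ae_mem_Ioo_unitMeasure] with x hx hx01
  exact hx.trans (indicator_of_mem (mem_Iio.2 (by linarith [hx01.2])) _)

theorem coeFn_indicatorIio_half {t : ℝ} (ht : t ≤ 1) :
    ⇑(indicatorIio (t / 2)) =ᵐ[unitMeasure]
      gammaFun ⇑(indicatorIio t) ⇑(indicatorIio 0) := by
  refine (coeFn_indicatorIio _).trans (EventuallyEq.trans (.of_eq ?_)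
    (gammaFun_ae_congr (coeFn_indicatorIio t) (coeFn_indicatorIio 0)).symm)
  ext x
  simp only [gammaFun, indicator, mem_Iio]
  split_ifs <;> first | rfl | (exfalso; linarith)

theorem coeFn_indicatorIio_add_one_half {t : ℝ} (ht : 0 ≤ t) :
    ⇑(indicatorIio ((t + 1) / 2)) =ᵐ[unitMeasure]
      gammaFun ⇑(indicatorIio 1) ⇑(indicatorIio t) := by
  refine (coeFn_indicatorIio _).trans (EventuallyEq.trans (.of_eq ?_)
    (gammaFun_ae_congr (coeFn_indicatorIio 1) (coeFn_indicatorIio t)).symm)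
  ext x
  simp only [gammaFun, indicator, mem_Iio]
  split_ifs <;> first | rfl | (exfalso; linarith)

section Uniqueness

variable (K : Lp ℝ 1 unitMeasure →L[ℝ] ℝ)
  (hK_one : ∀ one : Lp ℝ 1 unitMeasure,
    ⇑one =ᵐ[unitMeasure] (fun _ ↦ (1 : ℝ)) → K one = 0)
  (hK_gammaFun : ∀ f g h : Lp ℝ 1 unitMeasure,
    ⇑h =ᵐ[unitMeasure] gammaFun ⇑f ⇑g → K h = (K f + K g) / 2)
include hK_one hK_gammaFun

theorem map_indicatorIio_eq_zero (t : ℝ) : K (indicatorIio t) = 0 := by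
  have h_nonpos {t : ℝ} (ht : t ≤ 0) : K (indicatorIio t) = 0 := by
    rw [indicatorIio_of_nonpos ht, map_zero]
  have h_one_le {t : ℝ} (ht : 1 ≤ t) : K (indicatorIio t) = 0 :=
    hK_one _ (coeFn_indicatorIio_of_one_le ht)
  rcases le_or_gt t 0 with ht0 | ht0
  · exact h_nonpos ht0
  rcases le_or_gt 1 t with ht1 | ht1
  · exact h_one_le ht1
  refine eq_zero_of_abs_le_of_self_similar (ψ := fun t ↦ K (indicatorIio t)) (M := ‖K‖)
    (fun t _ ↦ by simpa using K.le_opNorm_of_le (norm_indicatorIio_le t))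
    (fun t ht ↦ ?_) (fun t ht ↦ ?_) t ⟨ht0.le, ht1.le⟩
  · rw [hK_gammaFun _ _ _ (coeFn_indicatorIio_half ht.2), h_nonpos le_rfl, add_zero]
  · rw [hK_gammaFun _ _ _ (coeFn_indicatorIio_add_one_half ht.1), h_one_le le_rfl, zero_add]

theorem eq_zero_of_map_const_of_map_gammaFun : K = 0 := by
  have h_scale {s : Set ℝ} (hs : MeasurableSet s) (c : ℝ) :
      K (indicatorConstLp 1 hs (measure_ne_top _ s) c) =
        c * K (indicatorConstLp 1 hs (measure_ne_top _ s) 1) := by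
    rw [← smul_eq_mul, ← K.map_smul, ← indicatorConstLp_smul, smul_eq_mul, mul_one]
  ext f
  refine map_eq_zero_of_map_indicatorConstLp_eq_zero ENNReal.one_ne_top K K.continuous
    (map_indicatorConstLp_eq_zero_of_isPiSystem ENNReal.one_ne_top K K.continuous
      (BorelSpace.measurable_eq.trans (borel_eq_generateFrom_Iio ℝ)) isPiSystem_Iio ?_ ?_) f
  · rintro _ ⟨t, rfl⟩ hs c
    rw [h_scale, mul_eq_zero]
    exact .inr (map_indicatorIio_eq_zero K hK_one hK_gammaFun t)
  · intro c
    rw [h_scale, hK_one _ (by rw [indicatorConstLp_univ]; exact Lp.coeFn_const ..), mul_zero]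

end Uniqueness

/-- the Lebesgue integral `I(f) = ∫_{[0,1]} f` is the unique continuous
linear functional on `L¹([0,1];ℝ)` with `I(1) = 1` and `I(γ(f,g)) = (I(f) + I(g))/2`. -/
theorem lebesgue_integral_unique_functional :
    ∃ I : Lp ℝ 1 unitMeasure →L[ℝ] ℝ,
      (∀ f : Lp ℝ 1 unitMeasure, I f = ∫ x, f x ∂unitMeasure) ∧
      (∀ one : Lp ℝ 1 unitMeasure,
        ⇑one =ᵐ[unitMeasure] (fun _ => (1 : ℝ)) → I one = 1) ∧
      (∀ f g h : Lp ℝ 1 unitMeasure,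
        ⇑h =ᵐ[unitMeasure] gammaFun ⇑f ⇑g → I h = (I f + I g) / 2) ∧
      (∀ J : Lp ℝ 1 unitMeasure →L[ℝ] ℝ,
        ((∀ one : Lp ℝ 1 unitMeasure,
            ⇑one =ᵐ[unitMeasure] (fun _ => (1 : ℝ)) → J one = 1) ∧
          (∀ f g h : Lp ℝ 1 unitMeasure,
            ⇑h =ᵐ[unitMeasure] gammaFun ⇑f ⇑g → J h = (J f + J g) / 2)) →
          J = I) := by
  have hI (f : Lp ℝ 1 unitMeasure) : L1.integralCLM f = ∫ x, f x ∂unitMeasure := by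
    rw [← L1.integral_eq, L1.integral_eq_integral]
  have hI_one (one : Lp ℝ 1 unitMeasure) (h : ⇑one =ᵐ[unitMeasure] fun _ ↦ (1 : ℝ)) :
      L1.integralCLM one = 1 := by
    simp [hI, integral_congr_ae h]
  have hI_gammaFun (f g h : Lp ℝ 1 unitMeasure) (hh : ⇑h =ᵐ[unitMeasure] gammaFun ⇑f ⇑g) :
      L1.integralCLM h = (L1.integralCLM f + L1.integralCLM g) / 2 := by
    rw [hI, hI, hI, integral_congr_ae hh,
      integral_gammaFun ((L1.integrable_coeFn h).congr hh), smul_eq_mul]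
    ring
  refine ⟨L1.integralCLM, hI, hI_one, hI_gammaFun, fun J ⟨hJ_one, hJ_gammaFun⟩ ↦
    sub_eq_zero.1 (eq_zero_of_map_const_of_map_gammaFun (J - L1.integralCLM) ?_ ?_)⟩
  · intro one h
    rw [sub_apply, hJ_one one h, hI_one one h, sub_self]
  · intro f g h hh
    simp only [sub_apply, hJ_gammaFun f g h hh, hI_gammaFun f g h hh]
    ring
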